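/- arXiv:2604.11651 — 2 statements merged into one kernel-verified Lean document; each statement's English description precedes it below -/
import Mathlib

section
/- Let n ≥ 4 be even and let C_n be the cycle graph on n vertices. Then the discrete Borsuk number of C_n equals 2, i.e., b(C_n) = 2. -/
open SimpleGraph

variable {V : Type*}

/-- A *Borsuk partition* of a finite simple graph `G` is a partition of its vertex set into
(nonempty) parts such that the subgraph induced on each part has (extended) diameter strictly
smaller than the (extended) diameter of `G`. -/
def IsBorsukPartition [Fintype V] [DecidableEq V] (G : SimpleGraph V)
    (P : Finpartition (Finset.univ : Finset V)) : Prop :=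
  ∀ s ∈ P.parts, (G.induce (s : Set V)).ediam < G.ediam

/-- The *discrete Borsuk number* of a finite simple graph `G`: the minimum number of parts
of a Borsuk partition of `G`. -/
noncomputable def borsukNumber [Fintype V] [DecidableEq V] (G : SimpleGraph V) : ℕ :=
  sInf {n | ∃ P : Finpartition (Finset.univ : Finset V),
    IsBorsukPartition G P ∧ P.parts.card = n}

/-!
Cut the even cycle `C_{2m}` into two arcs of `m` consecutive vertices. Each arc induces a path on
`m` vertices, of diameter `m - 1`, whereas the antipodal vertices `0` and `m` are at distance `m`,
because `x ↦ min x (2m - x)` changes by at most one along every edge. One part is never enough,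
since it would induce the whole graph.
-/

lemma Fin.val_sub_eq_one {n : ℕ} {a b : Fin n} (h : (a - b).val = 1) :
    a.val = b.val + 1 ∨ (a.val = 0 ∧ b.val + 1 = n) := by
  have := b.isLt
  rcases le_or_gt b a with hba | hab
  · rw [Fin.coe_sub_iff_le.mpr hba] at h
    omega
  · rw [Fin.coe_sub_iff_lt.mpr hab] at h
    omega

namespace SimpleGraph

variable {W : Type*} {G : SimpleGraph V} {G' : SimpleGraph W}

lemma Walk.apply_le_apply_add_length {f : V → ℕ} (hf : ∀ ⦃x y⦄, G.Adj x y → f y ≤ f x + 1)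
    {u v : V} (p : G.Walk u v) : f v ≤ f u + p.length := by
  induction p with
  | nil => simp
  | cons h _ ih =>
    have := hf h
    rw [Walk.length_cons]
    omega

lemma apply_le_apply_add_edist {f : V → ℕ} (hf : ∀ ⦃x y⦄, G.Adj x y → f y ≤ f x + 1)
    (u v : V) : (f v : ℕ∞) ≤ f u + G.edist u v := by
  rcases eq_or_ne (G.edist u v) ⊤ with h | h
  · simp [h]
  · obtain ⟨p, hp⟩ := exists_walk_of_edist_ne_top h
    rw [← hp]
    exact_mod_cast p.apply_le_apply_add_length hf

lemma Hom.edist_le (f : G →g G') (u v : V) : G'.edist (f u) (f v) ≤ G.edist u v := by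
  rcases eq_or_ne (G.edist u v) ⊤ with h | h
  · simp [h]
  · obtain ⟨p, hp⟩ := exists_walk_of_edist_ne_top h
    rw [← hp, ← Walk.length_map f]
    exact SimpleGraph.edist_le _

lemma Hom.ediam_le_of_surjective (f : G →g G') (hf : Function.Surjective f) :
    G'.ediam ≤ G.ediam := by
  refine ediam_le_of_edist_le fun u' v' => ?_
  obtain ⟨u, rfl⟩ := hf u'
  obtain ⟨v, rfl⟩ := hf v'
  exact (f.edist_le u v).trans edist_le_ediam

lemma Iso.ediam_eq (e : G ≃g G') : G.ediam = G'.ediam :=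
  le_antisymm (e.symm.toHom.ediam_le_of_surjective e.symm.surjective)
    (e.toHom.ediam_le_of_surjective e.surjective)

lemma Connected.ediam_lt_card [Fintype V] (hG : G.Connected) : G.ediam < Fintype.card V := by
  have := hG.nonempty
  obtain ⟨u, v, huv⟩ := G.exists_edist_eq_ediam_of_finite
  obtain ⟨p, hp, hlen⟩ := hG.exists_path_of_dist u v
  rw [← huv, ← (hG.preconnected u v).coe_dist_eq_edist, ← hlen]
  exact_mod_cast hp.length_lt

lemma le_ediam_cycleGraph (m : ℕ) : (m : ℕ∞) ≤ (cycleGraph (m + m)).ediam := by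
  rcases Nat.eq_zero_or_pos m with rfl | hm
  · simp
  let f : Fin (m + m) → ℕ := fun x => min x.val (m + m - x.val)
  have hf : ∀ ⦃x y⦄, (cycleGraph (m + m)).Adj x y → f y ≤ f x + 1 := fun x y hxy => by
    simp only [f]
    rcases cycleGraph_adj'.mp hxy with h | h <;> have := Fin.val_sub_eq_one h <;> omega
  calc (m : ℕ∞) = f ⟨m, by omega⟩ := by simp [f]
    _ ≤ f ⟨0, by omega⟩ + (cycleGraph (m + m)).edist ⟨0, by omega⟩ ⟨m, by omega⟩ :=
      apply_le_apply_add_edist hf _ _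
    _ = (cycleGraph (m + m)).edist ⟨0, by omega⟩ ⟨m, by omega⟩ := by simp [f]
    _ ≤ (cycleGraph (m + m)).ediam := edist_le_ediam

lemma ediam_induce_cycleGraph_arc_lt {n a k : ℕ} (hk : 0 < k) (hak : a + k ≤ n) :
    ((cycleGraph n).induce {x : Fin n | a ≤ x.val ∧ x.val < a + k}).ediam < k := by
  obtain ⟨k, rfl⟩ := Nat.exists_eq_add_one_of_ne_zero hk.ne'
  let f : pathGraph (k + 1) →g
      (cycleGraph n).induce {x : Fin n | a ≤ x.val ∧ x.val < a + (k + 1)} :=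
    { toFun i := ⟨⟨a + i, by omega⟩, by simp; omega⟩
      map_rel' hij := pathGraph_le_cycleGraph (pathGraph_adj.mpr (by
        rcases pathGraph_adj.mp hij with h | h <;> simp <;> omega)) }
  have hf : Function.Surjective f := fun ⟨x, hx⟩ => by
    simp only [Set.mem_ofPred_eq] at hx
    exact ⟨⟨x.val - a, by omega⟩, Subtype.ext (Fin.ext (show a + (x.val - a) = x.val by omega))⟩
  calc _ ≤ (pathGraph (k + 1)).ediam := f.ediam_le_of_surjective hf
    _ < Fintype.card (Fin (k + 1)) := (pathGraph_connected k).ediam_lt_card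
    _ = (k + 1 : ℕ) := by simp

end SimpleGraph

section Borsuk

variable [Fintype V] [DecidableEq V] [Nonempty V] {G : SimpleGraph V}
  {P : Finpartition (Finset.univ : Finset V)}

lemma IsBorsukPartition.two_le_card (hP : IsBorsukPartition G P) : 2 ≤ P.parts.card := by
  by_contra! hlt
  obtain ⟨s, hs⟩ : ∃ s, P.parts = {s} := by
    have := (P.parts_nonempty Finset.univ_nonempty.ne_empty).card_pos
    exact Finset.card_eq_one.mp (by omega)
  have huniv : s = Finset.univ := by simpa [hs] using P.sup_parts
  have hlt := hP s (by simp [hs])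
  rw [huniv, Finset.coe_univ, (induceUnivIso G).ediam_eq] at hlt
  exact lt_irrefl _ hlt

lemma borsukNumber_eq_two (hP : IsBorsukPartition G P) (hcard : P.parts.card = 2) :
    borsukNumber G = 2 :=
  le_antisymm (Nat.sInf_le ⟨P, hP, hcard⟩) <|
    le_csInf ⟨2, P, hP, hcard⟩ fun _ ⟨_, hQ, hQcard⟩ => hQcard ▸ hQ.two_le_card

end Borsuk

/-- For even `n ≥ 4`, the discrete Borsuk number of the cycle graph on `n` vertices is `2`. -/
theorem borsukNumber_cycleGraph_even (n : ℕ) (hn : 4 ≤ n) (hev : Even n) :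
    borsukNumber (cycleGraph n) = 2 := by
  obtain ⟨m, rfl⟩ := hev
  have hm : 0 < m := by omega
  have : Nonempty (Fin (m + m)) := ⟨⟨0, by omega⟩⟩
  let A : Finset (Fin (m + m)) := {x | x.val < m}
  have hA : A ≠ ⊥ := Finset.nonempty_iff_ne_empty.mp ⟨⟨0, by omega⟩, by simp [A, hm]⟩
  have hAc : Aᶜ ≠ ⊥ := Finset.nonempty_iff_ne_empty.mp ⟨⟨m, by omega⟩, by simp [A]⟩
  let P := (Finpartition.indiscrete hA).extend hAc disjoint_compl_right A.union_compl
  refine borsukNumber_eq_two (P := P) ?_ (Finpartition.card_extend _ _ _)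
  have hAarc : (A : Set (Fin (m + m))) = {x | 0 ≤ x.val ∧ x.val < 0 + m} := by ext; simp [A]
  have hAcarc : ((Aᶜ : Finset _) : Set (Fin (m + m))) = {x | m ≤ x.val ∧ x.val < m + m} := by
    ext; simp [A]
  intro s hs
  rcases Finset.mem_insert.mp hs with rfl | hs
  · rw [hAcarc]
    exact (ediam_induce_cycleGraph_arc_lt hm le_rfl).trans_le (le_ediam_cycleGraph m)
  · rw [Finset.mem_singleton.mp hs, hAarc]
    exact (ediam_induce_cycleGraph_arc_lt hm (by omega)).trans_le (le_ediam_cycleGraph m)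
end

section
/- Let G be a finite connected simple graph with at least one vertex that is not complete, and let C_G be the cone of G, i.e., the graph obtained from G by adding one new vertex adjacent to all vertices of G. Then diam(C_G) = 2, θ(C_G) = θ(G), and consequently b(C_G) = θ(G), i.e., the discrete Borsuk number of the cone of G equals the clique cover number of G. -/
open SimpleGraph

variable {V : Type*}

/-- The *clique cover number* of a finite simple graph `G`: the minimum number of parts of a
partition of the vertex set of `G` into cliques. -/
noncomputable def cliqueCoverNumber [Fintype V] [DecidableEq V] (G : SimpleGraph V) : ℕ :=
  sInf {n | ∃ P : Finpartition (Finset.univ : Finset V),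
    (∀ s ∈ P.parts, G.IsClique (s : Set V)) ∧ P.parts.card = n}

/-- The *cone* of a graph `G`: a new vertex (`none`) is added and joined to every vertex of `G`. -/
def coneGraph (G : SimpleGraph V) : SimpleGraph (Option V) where
  Adj x y :=
    match x, y with
    | some u, some v => G.Adj u v
    | some _, none => True
    | none, some _ => True
    | none, none => False
  symm := by
    refine ⟨?_⟩
    intro x y h
    match x, y with
    | some u, some v => exact G.adj_symm h
    | some _, none => trivial
    | none, some _ => trivial
  loopless := by
    refine ⟨?_⟩
    intro x
    match x with
    | some u => exact G.irrefl
    | none => exact fun h => h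

/-!
The apex of the cone is adjacent to everything, so the cone has diameter at most `2`, and exactly
`2` as soon as `G` has two distinct non-adjacent vertices. In a graph of diameter `2` an induced
subgraph has diameter `< 2` iff it is a clique, so Borsuk partitions are exactly clique partitions.
Clique partitions of `H` pull back to clique partitions of `G` along any homomorphism `Gᶜ →g Hᶜ`;
both `some : V → Option V` and, for any vertex `v₀`, `fun x ↦ x.getD v₀` are such homomorphisms
between `G` and its cone, so the two clique cover numbers agree.
-/

namespace Finpartition

variable {α β : Type*} [Fintype α] [DecidableEq α] [Fintype β] [DecidableEq β]

def comap (f : α → β) (P : Finpartition (Finset.univ : Finset β)) :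
    Finpartition (Finset.univ : Finset α) :=
  ofExistsUnique ((P.parts.image fun s ↦ ({a | f a ∈ s} : Finset α)).erase ∅)
    (fun _ _ ↦ Finset.subset_univ _)
    (fun a _ ↦ by
      obtain ⟨s, ⟨hs, has⟩, huniq⟩ := P.existsUnique_mem (Finset.mem_univ (f a))
      have ha : a ∈ ({a' | f a' ∈ s} : Finset α) := by simpa using has
      refine ⟨_, ⟨Finset.mem_erase.2 ⟨Finset.ne_empty_of_mem ha,
        Finset.mem_image_of_mem _ hs⟩, ha⟩, ?_⟩
      rintro t ⟨ht, hat⟩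
      obtain ⟨s', hs', rfl⟩ := Finset.mem_image.1 (Finset.mem_of_mem_erase ht)
      rw [huniq s' ⟨hs', by simpa using hat⟩])
    (Finset.notMem_erase _ _)

variable {f : α → β} {P : Finpartition (Finset.univ : Finset β)}

lemma card_comap_parts_le : (P.comap f).parts.card ≤ P.parts.card := by
  rw [comap, ofExistsUnique_parts]
  exact Finset.card_erase_le.trans Finset.card_image_le

lemma exists_eq_preimage_of_mem_comap_parts {t : Finset α} (ht : t ∈ (P.comap f).parts) :
    ∃ s ∈ P.parts, (t : Set α) = f ⁻¹' s := by
  rw [comap, ofExistsUnique_parts] at ht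
  obtain ⟨s, hs, rfl⟩ := Finset.mem_image.1 (Finset.mem_of_mem_erase ht)
  exact ⟨s, hs, by ext; simp⟩

end Finpartition

namespace SimpleGraph

variable {W : Type*}

lemma ediam_induce_le_one_iff_isClique (G : SimpleGraph V) (s : Set V) :
    (G.induce s).ediam ≤ 1 ↔ G.IsClique s := by
  simp only [ediam_le_iff, edist_le_one_iff_adj_or_eq, comap_adj, Function.Embedding.subtype_apply,
    Subtype.ext_iff, Subtype.forall, isClique_iff, Set.Pairwise]
  exact forall₄_congr fun _ _ _ _ ↦ or_iff_not_imp_right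

lemma IsClique.preimage_of_hom_compl {G : SimpleGraph V} {H : SimpleGraph W} (f : Gᶜ →g Hᶜ)
    {s : Set W} (hs : H.IsClique s) : G.IsClique (f ⁻¹' s) := by
  intro a ha b hb hab
  by_contra hnadj
  have hcompl := f.map_rel (show Gᶜ.Adj a b from ⟨hab, hnadj⟩)
  exact hcompl.2 (hs ha hb hcompl.1)

variable [Fintype V] [DecidableEq V] [Fintype W] [DecidableEq W]

lemma exists_cliquePartition_card_eq_cliqueCoverNumber (G : SimpleGraph V) :
    ∃ P : Finpartition (Finset.univ : Finset V),
      (∀ s ∈ P.parts, G.IsClique (s : Set V)) ∧ P.parts.card = cliqueCoverNumber G := by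
  refine Nat.sInf_mem (s := {n | ∃ P : Finpartition (Finset.univ : Finset V),
    (∀ s ∈ P.parts, G.IsClique (s : Set V)) ∧ P.parts.card = n}) ⟨_, ⊥, fun s hs ↦ ?_, rfl⟩
  obtain ⟨v, -, rfl⟩ := Finpartition.mem_bot_iff.1 hs
  simp

lemma cliqueCoverNumber_le_card_parts {G : SimpleGraph V}
    {P : Finpartition (Finset.univ : Finset V)} (hP : ∀ s ∈ P.parts, G.IsClique (s : Set V)) :
    cliqueCoverNumber G ≤ P.parts.card :=
  Nat.sInf_le ⟨P, hP, rfl⟩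

lemma cliqueCoverNumber_le_of_hom_compl {G : SimpleGraph V} {H : SimpleGraph W}
    (f : Gᶜ →g Hᶜ) : cliqueCoverNumber G ≤ cliqueCoverNumber H := by
  obtain ⟨P, hP, hcard⟩ := H.exists_cliquePartition_card_eq_cliqueCoverNumber
  calc cliqueCoverNumber G ≤ (P.comap f).parts.card := cliqueCoverNumber_le_card_parts ?_
    _ ≤ P.parts.card := Finpartition.card_comap_parts_le
    _ = cliqueCoverNumber H := hcard
  intro t ht
  obtain ⟨s, hs, hts⟩ := Finpartition.exists_eq_preimage_of_mem_comap_parts ht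
  exact hts ▸ (hP s hs).preimage_of_hom_compl f

lemma isBorsukPartition_iff_forall_isClique {G : SimpleGraph V}
    (hG : G.ediam = 2) (P : Finpartition (Finset.univ : Finset V)) :
    IsBorsukPartition G P ↔ ∀ s ∈ P.parts, G.IsClique (s : Set V) := by
  refine forall₂_congr fun s _ ↦ ?_
  rw [hG, ← ediam_induce_le_one_iff_isClique, ← one_add_one_eq_two,
    ENat.lt_add_one_iff ENat.one_ne_top]

lemma borsukNumber_eq_cliqueCoverNumber {G : SimpleGraph V}
    (hG : G.ediam = 2) : borsukNumber G = cliqueCoverNumber G := by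
  simp only [borsukNumber, cliqueCoverNumber, isBorsukPartition_iff_forall_isClique hG]

end SimpleGraph

section coneGraph

variable {G : SimpleGraph V}

@[simp]
lemma coneGraph_adj_some_some {u v : V} : (coneGraph G).Adj (some u) (some v) ↔ G.Adj u v :=
  Iff.rfl

@[simp]
lemma coneGraph_adj_none_some {v : V} : (coneGraph G).Adj none (some v) := trivial

@[simp]
lemma coneGraph_adj_some_none {v : V} : (coneGraph G).Adj (some v) none := trivial

lemma coneGraph_ediam_le_two : (coneGraph G).ediam ≤ 2 := by
  have hapex : (coneGraph G).eccent none ≤ 1 := by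
    rw [eccent_le_one_iff]
    rintro (_ | v) hne
    exacts [absurd rfl hne, coneGraph_adj_none_some]
  calc (coneGraph G).ediam ≤ 2 * (coneGraph G).eccent none := ediam_le_two_mul_eccent none
    _ ≤ 2 * 1 := by gcongr
    _ = 2 := mul_one 2

lemma two_le_coneGraph_ediam {u v : V} (hne : u ≠ v) (hnadj : ¬ G.Adj u v) :
    2 ≤ (coneGraph G).ediam := by
  have hfar : ¬ (coneGraph G).edist (some u) (some v) ≤ 1 := by
    simp [edist_le_one_iff_adj_or_eq, hne, hnadj]
  calc (2 : ℕ∞) = 1 + 1 := one_add_one_eq_two.symm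
    _ ≤ (coneGraph G).edist (some u) (some v) := Order.add_one_le_of_lt (not_le.1 hfar)
    _ ≤ (coneGraph G).ediam := edist_le_ediam

lemma cliqueCoverNumber_coneGraph [Fintype V] [DecidableEq V] [Nonempty V] :
    cliqueCoverNumber (coneGraph G) = cliqueCoverNumber G := by
  inhabit V
  refine le_antisymm (cliqueCoverNumber_le_of_hom_compl ⟨fun x ↦ x.getD default, ?_⟩)
    (cliqueCoverNumber_le_of_hom_compl ⟨some, ?_⟩)
  · rintro (_ | a) (_ | b) ⟨hne, hnadj⟩
    · exact absurd rfl hne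
    · exact absurd coneGraph_adj_none_some hnadj
    · exact absurd coneGraph_adj_some_none hnadj
    · exact ⟨fun hab ↦ hne (congrArg some hab), hnadj⟩
  · exact fun ⟨hne, hnadj⟩ ↦ ⟨Option.some_injective V |>.ne hne, hnadj⟩

end coneGraph

theorem borsukNumber_coneGraph_general [Fintype V] [DecidableEq V] [Nonempty V] (G : SimpleGraph V)
    (hnc : ∃ u v : V, u ≠ v ∧ ¬ G.Adj u v) :
    (coneGraph G).ediam = 2 ∧
      cliqueCoverNumber (coneGraph G) = cliqueCoverNumber G ∧
      borsukNumber (coneGraph G) = cliqueCoverNumber G := by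
  obtain ⟨u, v, hne, hnadj⟩ := hnc
  have hdiam : (coneGraph G).ediam = 2 :=
    coneGraph_ediam_le_two.antisymm (two_le_coneGraph_ediam hne hnadj)
  have hcover : cliqueCoverNumber (coneGraph G) = cliqueCoverNumber G :=
    cliqueCoverNumber_coneGraph
  exact ⟨hdiam, hcover, (borsukNumber_eq_cliqueCoverNumber hdiam).trans hcover⟩

/-- If `G` is a finite connected non-complete graph (with at least one vertex), then its cone
`C_G` has diameter `2`, the clique cover number of `C_G` equals that of `G`, and consequently
the discrete Borsuk number of `C_G` equals the clique cover number of `G`. -/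
theorem borsukNumber_coneGraph [Fintype V] [DecidableEq V] [Nonempty V] (G : SimpleGraph V)
    (hconn : G.Connected) (hnc : ∃ u v : V, u ≠ v ∧ ¬ G.Adj u v) :
    (coneGraph G).ediam = 2 ∧
      cliqueCoverNumber (coneGraph G) = cliqueCoverNumber G ∧
      borsukNumber (coneGraph G) = cliqueCoverNumber G :=
  borsukNumber_coneGraph_general G hnc
end
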